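/- (Model 2f3n4i) Define vector fields on ℝ⁴ (coordinates (x,y,u,v)) by e₁ = ∂x + y∂u + 2x∂v, e₂ = ∂y + x∂u + 2y∂v, e₃ = x∂x + y∂y + 2u∂u + 2v∂v, e₄ = y∂x + x∂y + v∂u + 4u∂v, and let S = {(x, y, xy, x² + y²) : (x,y) ∈ ℝ²}. Then: (i) each of e₁, e₂, e₃, e₄ is tangent to S; (ii) at every point of S the first two components of e₁ and e₂ are (1,0) and (0,1), so S is affinely homogeneous; (iii) with bracket [X,Y](p) = (DY)(p)(X(p)) − (DX)(p)(Y(p)) one has [e₁,e₂] = 0, [e₁,e₃] = e₁, [e₁,e₄] = e₂, [e₂,e₃] = e₂, [e₂,e₄] = e₁, [e₃,e₄] = 0. -/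

import Mathlib

namespace Model2f3n4i

/-- Lie bracket of vector fields on `ℝ⁴`, `[X,Y](p) = DY(p)(X(p)) − DX(p)(Y(p))`. -/
noncomputable def lieBracket (X Y : (Fin 4 → ℝ) → Fin 4 → ℝ) :
    (Fin 4 → ℝ) → Fin 4 → ℝ :=
  fun p => fderiv ℝ Y p (X p) - fderiv ℝ X p (Y p)

/-- Tangency of a vector field `X` on `ℝ⁴ ∋ (x,y,u,v)` to the graph
`S = {(x, y, F(x,y), G(x,y))}`. -/
def TangentToGraph (F G : ℝ × ℝ → ℝ) (X : (Fin 4 → ℝ) → Fin 4 → ℝ) : Prop :=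
  ∀ p : ℝ × ℝ,
    X ![p.1, p.2, F p, G p] 2
        = fderiv ℝ F p (1, 0) * X ![p.1, p.2, F p, G p] 0
          + fderiv ℝ F p (0, 1) * X ![p.1, p.2, F p, G p] 1 ∧
    X ![p.1, p.2, F p, G p] 3
        = fderiv ℝ G p (1, 0) * X ![p.1, p.2, F p, G p] 0
          + fderiv ℝ G p (0, 1) * X ![p.1, p.2, F p, G p] 1

/-- `u = xy`. -/
noncomputable def F : ℝ × ℝ → ℝ := fun p => p.1 * p.2
/-- `v = x² + y²`. -/
noncomputable def G : ℝ × ℝ → ℝ := fun p => p.1 ^ 2 + p.2 ^ 2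

/-- `e₁ = ∂x + y∂u + 2x∂v`. -/
noncomputable def e₁ : (Fin 4 → ℝ) → Fin 4 → ℝ := fun p => ![1, 0, p 1, 2 * p 0]
/-- `e₂ = ∂y + x∂u + 2y∂v`. -/
noncomputable def e₂ : (Fin 4 → ℝ) → Fin 4 → ℝ := fun p => ![0, 1, p 0, 2 * p 1]
/-- `e₃ = x∂x + y∂y + 2u∂u + 2v∂v`. -/
noncomputable def e₃ : (Fin 4 → ℝ) → Fin 4 → ℝ :=
  fun p => ![p 0, p 1, 2 * p 2, 2 * p 3]
/-- `e₄ = y∂x + x∂y + v∂u + 4u∂v`. -/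
noncomputable def e₄ : (Fin 4 → ℝ) → Fin 4 → ℝ :=
  fun p => ![p 1, p 0, p 3, 4 * p 2]

/-! All four fields are affine, `p ↦ b + A p`, so the derivative of each is its constant matrix
`A`, and the bracket of `a + A p` with `b + B p` is again affine, with translation `B a - A b` and
matrix `B A - A B`. The bracket relations thus reduce to identities between `4 × 4` matrices.
Tangency is a pointwise identity once the derivatives of `xy` and `x² + y²` are known. -/

open Matrix

def affineField {n : ℕ} (b : Fin n → ℝ) (A : Matrix (Fin n) (Fin n) ℝ) :
    (Fin n → ℝ) → Fin n → ℝ :=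
  fun p => b + A *ᵥ p

theorem affineField_zero {n : ℕ} : affineField (0 : Fin n → ℝ) 0 = 0 := by
  funext p
  simp [affineField]

theorem hasFDerivAt_affineField {n : ℕ} (b : Fin n → ℝ) (A : Matrix (Fin n) (Fin n) ℝ)
    (p : Fin n → ℝ) :
    HasFDerivAt (affineField b A) (LinearMap.toContinuousLinearMap (toLin' A)) p :=
  (LinearMap.toContinuousLinearMap (toLin' A)).hasFDerivAt.const_add b

theorem lieBracket_affineField (a b : Fin 4 → ℝ) (A B : Matrix (Fin 4) (Fin 4) ℝ) :
    lieBracket (affineField a A) (affineField b B)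
      = affineField (B *ᵥ a - A *ᵥ b) (B * A - A * B) := by
  funext p
  simp only [lieBracket, (hasFDerivAt_affineField _ _ _).fderiv,
    LinearMap.coe_toContinuousLinearMap', toLin'_apply, affineField, mulVec_add,
    mulVec_mulVec, sub_mulVec]
  abel

theorem e₁_eq :
    e₁ = affineField ![1, 0, 0, 0] !![0, 0, 0, 0; 0, 0, 0, 0; 0, 1, 0, 0; 2, 0, 0, 0] := by
  funext p i
  fin_cases i <;> simp [e₁, affineField, vecHead, vecTail]

theorem e₂_eq :
    e₂ = affineField ![0, 1, 0, 0] !![0, 0, 0, 0; 0, 0, 0, 0; 1, 0, 0, 0; 0, 2, 0, 0] := by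
  funext p i
  fin_cases i <;> simp [e₂, affineField, vecHead, vecTail]

theorem e₃_eq : e₃ = affineField 0 !![1, 0, 0, 0; 0, 1, 0, 0; 0, 0, 2, 0; 0, 0, 0, 2] := by
  funext p i
  fin_cases i <;> simp [e₃, affineField, vecHead, vecTail]

theorem e₄_eq : e₄ = affineField 0 !![0, 1, 0, 0; 1, 0, 0, 0; 0, 0, 0, 1; 0, 0, 4, 0] := by
  funext p i
  fin_cases i <;> simp [e₄, affineField, vecHead, vecTail]

theorem fderiv_F_apply (p v : ℝ × ℝ) : fderiv ℝ F p v = p.2 * v.1 + p.1 * v.2 := by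
  have h : HasFDerivAt (fun q : ℝ × ℝ => q.1 * q.2) _ p :=
    (hasFDerivAt_fst (𝕜 := ℝ) (p := p)).mul (hasFDerivAt_snd (𝕜 := ℝ) (p := p))
  rw [show F = fun q : ℝ × ℝ => q.1 * q.2 from rfl, h.fderiv]
  simp
  ring

theorem fderiv_G_apply (p v : ℝ × ℝ) : fderiv ℝ G p v = 2 * p.1 * v.1 + 2 * p.2 * v.2 := by
  have h : HasFDerivAt (fun q : ℝ × ℝ => q.1 ^ 2 + q.2 ^ 2) _ p :=
    ((hasFDerivAt_fst (𝕜 := ℝ) (p := p)).pow 2).add ((hasFDerivAt_snd (𝕜 := ℝ) (p := p)).pow 2)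
  rw [show G = fun q : ℝ × ℝ => q.1 ^ 2 + q.2 ^ 2 from rfl, h.fderiv]
  simp

theorem linearIndependent_one_zero_zero_one :
    LinearIndependent ℝ ![((1 : ℝ), (0 : ℝ)), (0, 1)] := by
  convert (Module.Basis.finTwoProd ℝ).linearIndependent
  ext i <;> fin_cases i <;> simp

/-- **Model 2f3n4i:** the surface `{u = xy, v = x² + y²}` is affinely homogeneous, with
tangent vector fields `e₁, e₂, e₃, e₄` satisfying the stated bracket relations. -/
theorem model_2f3n4i :
    (TangentToGraph F G e₁ ∧ TangentToGraph F G e₂ ∧ TangentToGraph F G e₃ ∧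
      TangentToGraph F G e₄) ∧
    (∀ p : ℝ × ℝ,
      e₁ ![p.1, p.2, F p, G p] 0 = 1 ∧ e₁ ![p.1, p.2, F p, G p] 1 = 0 ∧
      e₂ ![p.1, p.2, F p, G p] 0 = 0 ∧ e₂ ![p.1, p.2, F p, G p] 1 = 1 ∧
      LinearIndependent ℝ
        ![((e₁ ![p.1, p.2, F p, G p] 0, e₁ ![p.1, p.2, F p, G p] 1) : ℝ × ℝ),
          ((e₂ ![p.1, p.2, F p, G p] 0, e₂ ![p.1, p.2, F p, G p] 1) : ℝ × ℝ)]) ∧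
    (lieBracket e₁ e₂ = 0 ∧ lieBracket e₁ e₃ = e₁ ∧ lieBracket e₁ e₄ = e₂ ∧
      lieBracket e₂ e₃ = e₂ ∧ lieBracket e₂ e₄ = e₁ ∧ lieBracket e₃ e₄ = 0) := by
  refine ⟨?_, fun p => ⟨rfl, rfl, rfl, rfl, linearIndependent_one_zero_zero_one⟩, ?_⟩
  · refine ⟨fun p => ?_, fun p => ?_, fun p => ?_, fun p => ?_⟩ <;>
      simp only [fderiv_F_apply, fderiv_G_apply] <;> constructor <;>
      simp [e₁, e₂, e₃, e₄, F, G] <;> ring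
  · refine ⟨?_, ?_, ?_, ?_, ?_, ?_⟩ <;>
      simp only [e₁_eq, e₂_eq, e₃_eq, e₄_eq, lieBracket_affineField, ← affineField_zero] <;>
      congr 1 <;>
      simp [funext_iff, ← Matrix.ext_iff, Fin.forall_fin_succ, vecHead, vecTail] <;> norm_num

end Model2f3n4i
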